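/- arXiv:2108.03910 — 4 statements merged into one kernel-verified Lean document; each statement's English description precedes it below -/
import Mathlib

section
/- Let G be a C_6-saturated graph and let u, v be non-adjacent vertices of G. Suppose C is a 6-cycle in G + uv containing the edge uv, and P_1 is a subpath of C of length p with endpoints x and y that contains the edge uv. If G contains a path P_2 of length p from x to y with V(P_1) ∩ V(P_2) = {x, y}, then G contains a path P of length 6 - p from x to y such that P shares an internal vertex with P_2 (i.e., (V(P) ∩ V(P_2)) \ {x,y} is nonempty). -/
open SimpleGraph

/-- The graph obtained from `G` by adding the edge `uv`. -/
def addEdge {V : Type*} (G : SimpleGraph V) (u v : V) : SimpleGraph V :=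
  G ⊔ SimpleGraph.fromEdgeSet {s(u, v)}

/-- `G` contains a cycle of length `k`. -/
def HasCycleLen {V : Type*} (G : SimpleGraph V) (k : ℕ) : Prop :=
  ∃ (v : V) (c : G.Walk v v), c.IsCycle ∧ c.length = k

/-- `G` is `C_k`-saturated. -/
def IsCSaturated {V : Type*} (k : ℕ) (G : SimpleGraph V) : Prop :=
  ¬ HasCycleLen G k ∧ ∀ u v : V, u ≠ v → ¬ G.Adj u v → HasCycleLen (addEdge G u v) k

/-- degree of a vertex. -/
noncomputable def degOf {V : Type*} (G : SimpleGraph V) (v : V) : ℕ :=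
  (G.neighborSet v).ncard

/-- `v` lies in a triangle of `G`. -/
def InTriangle {V : Type*} (G : SimpleGraph V) (v : V) : Prop :=
  ∃ a b, G.Adj v a ∧ G.Adj v b ∧ G.Adj a b

/-- `T₂(G)`: degree-2 vertices in a triangle having a degree-2 neighbour. -/
def T2set {V : Type*} (G : SimpleGraph V) : Set V :=
  {v | degOf G v = 2 ∧ InTriangle G v ∧ ∃ w, G.Adj v w ∧ degOf G w = 2}

/-!
The complementary arc `Q` of the 6-cycle avoids the new edge `uv`, so it is a path of length
`6 - p` from `y` to `x` in `G` itself. If `Q` met `P₂` only in `x` and `y`, then `P₂` followed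
by `Q` would be a 6-cycle in `G`, which is `C₆`-free.
-/

namespace SimpleGraph.Walk

variable {V : Type*} {G : SimpleGraph V}

lemma isCycle_of_nodup_support_tail {u : V} {c : G.Walk u u} (hc : c.support.tail.Nodup)
    (hlen : 3 ≤ c.length) : c.IsCycle := by
  have hnil : ¬ c.Nil := fun h => by simp [h.length_eq_zero] at hlen
  exact isCycle_iff_isPath_tail_and_le_length.mpr
    ⟨IsPath.mk' (c.support_tail_of_not_nil hnil ▸ hc), hlen⟩

lemma IsPath.start_notMem_support_tail {u v : V} {p : G.Walk u v} (hp : p.IsPath) :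
    u ∉ p.support.tail := by
  have := hp.support_nodup
  rw [← p.cons_tail_support, List.nodup_cons] at this
  exact this.1

lemma IsPath.append_isCycle {u v : V} {p : G.Walk u v} {q : G.Walk v u} (hp : p.IsPath)
    (hq : q.IsPath) (hpq : ∀ w ∈ p.support, w ∈ q.support → w = u ∨ w = v)
    (hlen : 3 ≤ p.length + q.length) : (p.append q).IsCycle := by
  refine isCycle_of_nodup_support_tail ?_ (by rwa [length_append])
  rw [tail_support_append, List.nodup_append]
  refine ⟨hp.support_nodup.sublist (List.tail_sublist _),
    hq.support_nodup.sublist (List.tail_sublist _), ?_⟩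
  rintro w hwp _ hwq rfl
  rcases hpq w (List.mem_of_mem_tail hwp) (List.mem_of_mem_tail hwq) with rfl | rfl
  · exact hp.start_notMem_support_tail hwp
  · exact hq.start_notMem_support_tail hwq

lemma IsCycle.notMem_edges_of_mem_edges_append_left {u v : V} {p : G.Walk u v} {q : G.Walk v u}
    (hc : (p.append q).IsCycle) {e : Sym2 V} (he : e ∈ p.edges) : e ∉ q.edges := by
  have := hc.edges_nodup
  rw [edges_append, List.nodup_append] at this
  exact fun he' => this.2.2 e he e he' rfl

end SimpleGraph.Walk

lemma mem_edgeSet_of_mem_edges_addEdge {V : Type*} {G : SimpleGraph V} {u v a b : V}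
    {p : (addEdge G u v).Walk a b} (huv : s(u, v) ∉ p.edges) {e : Sym2 V} (he : e ∈ p.edges) :
    e ∈ G.edgeSet := by
  have := p.edges_subset_edgeSet he
  simp only [addEdge, edgeSet_sup, edgeSet_fromEdgeSet, Set.mem_union, Set.mem_sdiff,
    Set.mem_singleton_iff] at this
  rcases this with h | ⟨rfl, _⟩
  · exact h
  · exact absurd he huv

theorem lemma_3_1_general {V : Type*} (G : SimpleGraph V) (hG : IsCSaturated 6 G)
    (u v x y : V) (p : ℕ)
    (P1 : (addEdge G u v).Walk x y) (hP1len : P1.length = p)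
    (huv : s(u, v) ∈ P1.edges)
    (hC : ∃ Q : (addEdge G u v).Walk y x, (P1.append Q).IsCycle ∧ P1.length + Q.length = 6)
    (P2 : G.Walk x y) (hP2 : P2.IsPath) (hP2len : P2.length = p) :
    ∃ P : G.Walk x y, P.IsPath ∧ P.length = 6 - p ∧
      ∃ w, w ∈ P.support ∧ w ∈ P2.support ∧ w ≠ x ∧ w ≠ y := by
  obtain ⟨Q, hcyc, hlen⟩ := hC
  have hP1 : ¬ P1.Nil := fun h => by cases h; simp at huv
  have hQG : ∀ e ∈ Q.edges, e ∈ G.edgeSet := fun _ =>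
    mem_edgeSet_of_mem_edges_addEdge (hcyc.notMem_edges_of_mem_edges_append_left huv)
  set Q' := Q.transfer G hQG
  have hQ' : Q'.IsPath := (hcyc.isPath_of_append_right hP1).transfer hQG
  have hQ'len : Q'.length = 6 - p := by rw [Walk.length_transfer]; omega
  refine ⟨Q'.reverse, hQ'.reverse, by rwa [Walk.length_reverse], ?_⟩
  by_contra! hdisj
  have hmeet : ∀ w ∈ P2.support, w ∈ Q'.support → w = x ∨ w = y :=
    fun w hw hwQ => or_iff_not_imp_left.mpr <|
      hdisj w (by rwa [Walk.support_reverse, List.mem_reverse]) hw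
  exact hG.1 ⟨x, P2.append Q', hP2.append_isCycle hQ' hmeet (by omega),
    by rw [Walk.length_append]; omega⟩

/-- Lemma 3.1 of the paper. -/
theorem lemma_3_1 {V : Type*} (G : SimpleGraph V) (hG : IsCSaturated 6 G)
    (u v x y : V) (hne : u ≠ v) (hna : ¬ G.Adj u v) (p : ℕ)
    (P1 : (addEdge G u v).Walk x y) (hP1 : P1.IsPath) (hP1len : P1.length = p)
    (huv : s(u, v) ∈ P1.edges)
    (hC : ∃ Q : (addEdge G u v).Walk y x, (P1.append Q).IsCycle ∧ P1.length + Q.length = 6)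
    (P2 : G.Walk x y) (hP2 : P2.IsPath) (hP2len : P2.length = p)
    (hint : ∀ w, w ∈ P1.support → w ∈ P2.support → w = x ∨ w = y) :
    ∃ P : G.Walk x y, P.IsPath ∧ P.length = 6 - p ∧
      ∃ w, w ∈ P.support ∧ w ∈ P2.support ∧ w ≠ x ∧ w ≠ y :=
  lemma_3_1_general G hG u v x y p P1 hP1len huv hC P2 hP2 hP2len
end

section
/- Let G be a C_6-saturated graph with minimum degree 2, and let X be the set of vertices v of G such that either d(v) ≥ 3, or d(v) = 2 and v lies in a triangle but has no neighbor of degree 2. Then the sum of degrees over X is at least 3|X|. -/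
open SimpleGraph

/-!
Split `X` into `X₃ = {v | 3 ≤ d(v)}` and `T₁(G)`. Vertices of `T₁(G)` have degree 2, so it suffices
to show `|T₁(G)| + 3|X₃| ≤ ∑_{a ∈ X₃} d(a)`. Saturation enters through a single consequence: any two
non-adjacent vertices are the ends of a path of length five. From it, every neighbour of a vertex of
`T₁(G)` has degree at least 4, and a vertex with three neighbours in `T₁(G)` has degree at least 5.
A vertex `a` adjacent to `v ∈ T₁(G)` is also adjacent to the third vertex of the triangle at `v`,
which lies outside `T₁(G)`; together this gives at most `2d(a) - 6` neighbours of `a` in `T₁(G)`.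
Double counting the edges between `X₃` and `T₁(G)`, each vertex of `T₁(G)` having both neighbours
in `X₃`, yields the bound.
-/

open Function

section Hexagons

variable {V : Type*} {G : SimpleGraph V}

lemma addEdge_adj {u v : V} (huv : u ≠ v) {x y : V} :
    (addEdge G u v).Adj x y ↔ G.Adj x y ∨ (x = u ∧ y = v) ∨ (x = v ∧ y = u) := by
  simp only [addEdge, sup_adj, fromEdgeSet_adj, Set.mem_singleton_iff, Sym2.eq_iff]
  constructor
  · rintro (h | ⟨h, -⟩) <;> tauto
  · rintro (h | ⟨rfl, rfl⟩ | ⟨rfl, rfl⟩) <;> simp_all [huv.symm]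

def IsHexagon (G : SimpleGraph V) (f : Fin 6 → V) : Prop :=
  Injective f ∧ ∀ i, G.Adj (f i) (f (i + 1))

lemma IsHexagon.comp_add {f : Fin 6 → V} (hf : IsHexagon G f) (k : Fin 6) :
    IsHexagon G fun i => f (i + k) :=
  ⟨hf.1.comp (add_left_injective k), fun i => by simpa [add_right_comm] using hf.2 (i + k)⟩

lemma IsHexagon.comp_sub {f : Fin 6 → V} (hf : IsHexagon G f) (k : Fin 6) :
    IsHexagon G fun i => f (k - i) :=
  ⟨hf.1.comp (sub_right_injective), fun i => by
    simpa [sub_add_eq_sub_sub] using (hf.2 (k - i - 1)).symm⟩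

lemma exists_isHexagon_iff_hasCycleLen : (∃ f, IsHexagon G f) ↔ HasCycleLen G 6 := by
  constructor
  · rintro ⟨f, hf, hadj⟩
    refine ⟨f 0, .cons (hadj 0) <| .cons (hadj 1) <| .cons (hadj 2) <| .cons (hadj 3) <|
      .cons (hadj 4) <| .cons (hadj 5) .nil, ?_, rfl⟩
    rw [Walk.cons_isCycle_iff, Walk.isPath_def]
    refine ⟨(List.Nodup.map hf (by decide) : (List.map f [1, 2, 3, 4, 5, 0]).Nodup), ?_⟩
    simp [hf.eq_iff]
  · rintro ⟨w, c, hc, hlen⟩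
    refine ⟨fun i => c.getVert i, fun i j hij => ?_, fun i => ?_⟩
    · exact Fin.ext (hc.getVert_injOn' (by simp [hlen]; omega) (by simp [hlen]; omega) hij)
    · have hnext : c.getVert ↑(i + 1) = c.getVert (↑i + 1) := by
        by_cases hi : (i : ℕ) = 5
        · obtain rfl : i = 5 := Fin.ext hi
          simp [c.getVert_of_length_le (hlen.le : c.length ≤ 5 + 1)]
        · rw [Fin.val_add_one_of_lt' (by omega)]
      simpa only [hnext] using c.adj_getVert_succ (by omega)

lemma IsHexagon.adj_of_addEdge {u v : V} (huv : u ≠ v) {f : Fin 6 → V}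
    (hf : IsHexagon (addEdge G u v) f) (h0 : f 0 = u) (h5 : f 5 = v) {i : Fin 6} (hi : i ≠ 5) :
    G.Adj (f i) (f (i + 1)) := by
  rcases (addEdge_adj huv).1 (hf.2 i) with h | ⟨hu, hv⟩ | ⟨hv, -⟩
  · exact h
  · rw [← h0, hf.1.eq_iff] at hu
    rw [← h5, hf.1.eq_iff, hu] at hv
    exact absurd hv (by decide)
  · rw [← h5, hf.1.eq_iff] at hv
    exact absurd hv hi

lemma IsCSaturated.exists_path (hG : IsCSaturated 6 G) {u v : V} (huv : u ≠ v)
    (hadj : ¬G.Adj u v) :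
    ∃ f : Fin 6 → V, Injective f ∧ f 0 = u ∧ f 5 = v ∧ ∀ i ≠ 5, G.Adj (f i) (f (i + 1)) := by
  obtain ⟨f, hf⟩ := exists_isHexagon_iff_hasCycleLen.2 (hG.2 u v huv hadj)
  obtain ⟨k, hk⟩ : ∃ k, ¬G.Adj (f k) (f (k + 1)) := by
    by_contra! h
    exact hG.1 (exists_isHexagon_iff_hasCycleLen.1 ⟨f, hf.1, h⟩)
  suffices ∃ g, IsHexagon (addEdge G u v) g ∧ g 0 = u ∧ g 5 = v by
    obtain ⟨g, hg, h0, h5⟩ := this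
    exact ⟨g, hg.1, h0, h5, fun i hi => hg.adj_of_addEdge huv h0 h5 hi⟩
  rcases (addEdge_adj huv).1 (hf.2 k) with h | ⟨hu, hv⟩ | ⟨hv, hu⟩
  · exact absurd h hk
  · exact ⟨_, hf.comp_sub k, by simpa using hu, by simpa [show k - 5 = k + 1 by omega] using hv⟩
  · exact ⟨_, hf.comp_add (k + 1), by simpa using hu,
      by simpa [show 5 + (k + 1) = k by omega] using hv⟩

-- The path leaves `v` through `a` or `b`. Through `a` it must continue to `b`, and `v a x ⋯ b`
-- is a 6-cycle; through `b` it avoids `a`, and `a b ⋯ x` is a 6-cycle.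
lemma IsCSaturated.exists_adj_notMem_of_triangle (hG : IsCSaturated 6 G) {v a b x : V}
    (hN : ∀ y, G.Adj v y ↔ y = a ∨ y = b) (hab : G.Adj a b) (hax : G.Adj a x) (hxv : x ≠ v)
    (hxb : x ≠ b) : ∃ y, G.Adj a y ∧ y ∉ ({v, b, x} : Set V) := by
  by_contra! hNa
  simp only [Set.mem_insert_iff, Set.mem_singleton_iff] at hNa
  have hvb : G.Adj v b := (hN b).2 (.inr rfl)
  have hvx : ¬G.Adj v x := by
    rw [hN]
    rintro (rfl | rfl)
    exacts [hax.ne rfl, hxb rfl]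
  obtain ⟨f, hf, rfl, rfl, hpath⟩ := hG.exists_path (Ne.symm hxv) hvx
  apply hG.1
  rcases (hN (f 1)).1 (hpath 0 (by decide)) with rfl | rfl
  · obtain rfl : f 2 = b := by simpa [hf.eq_iff] using hNa (f 2) (hpath 1 (by decide))
    refine exists_isHexagon_iff_hasCycleLen.1 ⟨f ∘ ![0, 1, 5, 4, 3, 2], hf.comp (by decide), ?_⟩
    intro i
    fin_cases i
    exacts [hpath 0 (by decide), hax, (hpath 4 (by decide)).symm, (hpath 3 (by decide)).symm,
      (hpath 2 (by decide)).symm, hvb.symm]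
  · have hfa : a ∉ Set.range fun i : Fin 5 => f i.succ := by
      rintro ⟨i, rfl⟩
      fin_cases i
      · exact hab.ne rfl
      · simpa [hf.eq_iff] using hNa (f 3) (hpath 2 (by decide))
      · simpa [hf.eq_iff] using hNa (f 2) (hpath 2 (by decide)).symm
      · simpa [hf.eq_iff] using hNa (f 3) (hpath 3 (by decide)).symm
      · exact hax.ne rfl
    refine exists_isHexagon_iff_hasCycleLen.1 ⟨Fin.cons a fun i => f i.succ,
      Fin.cons_injective_of_injective hfa (hf.comp (Fin.succ_injective _)), ?_⟩
    intro i
    fin_cases i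
    exacts [hab, hpath 1 (by decide), hpath 2 (by decide), hpath 3 (by decide),
      hpath 4 (by decide), hax.symm]

-- The path `v₁ ⋯ v₂` has second vertex in `{a, b}` and second-to-last vertex the other one;
-- the step after (or before) `a` can then only be `v₃`, whose neighbours are already used.
lemma IsCSaturated.exists_adj_notMem_of_twins (hG : IsCSaturated 6 G) {v₁ v₂ v₃ a b : V}
    (h₁₂ : v₁ ≠ v₂) (hN₁ : ∀ x, G.Adj v₁ x ↔ x = a ∨ x = b) (hN₂ : ∀ x, G.Adj v₂ x ↔ x = a ∨ x = b)
    (hN₃ : ∀ x, G.Adj v₃ x ↔ x = a ∨ x = b) :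
    ∃ x, G.Adj a x ∧ x ∉ ({v₁, v₂, v₃, b} : Set V) := by
  by_contra! hNa
  simp only [Set.mem_insert_iff, Set.mem_singleton_iff] at hNa
  have hnadj : ¬G.Adj v₁ v₂ := by
    rw [hN₁]
    rintro (rfl | rfl)
    exacts [G.irrefl ((hN₂ _).2 (.inl rfl)), G.irrefl ((hN₂ _).2 (.inr rfl))]
  obtain ⟨f, hf, rfl, rfl, hpath⟩ := hG.exists_path h₁₂ hnadj
  rcases (hN₁ (f 1)).1 (hpath 0 (by decide)) with rfl | rfl <;>
    rcases (hN₂ (f 4)).1 (hpath 4 (by decide)).symm with h4 | h4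
  · simp [hf.eq_iff] at h4
  · subst h4
    obtain rfl : f 2 = v₃ := by simpa [hf.eq_iff] using hNa (f 2) (hpath 1 (by decide))
    simpa [hf.eq_iff] using (hN₃ (f 3)).1 (hpath 2 (by decide))
  · subst h4
    obtain rfl : f 3 = v₃ := by simpa [hf.eq_iff] using hNa (f 3) (hpath 3 (by decide)).symm
    simpa [hf.eq_iff] using (hN₃ (f 2)).1 (hpath 2 (by decide)).symm
  · simp [hf.eq_iff] at h4

end Hexagons

section Degrees

open scoped Classical

variable {V : Type*} {G : SimpleGraph V}

def T1set (G : SimpleGraph V) : Set V :=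
  {v | degOf G v = 2 ∧ InTriangle G v ∧ ∀ w, G.Adj v w → degOf G w ≠ 2}

variable [Finite V] {v a b : V}

lemma card_le_degOf {s : Finset V} (hs : ∀ x ∈ s, G.Adj v x) : s.card ≤ degOf G v := by
  rw [← Set.ncard_coe_finset]
  exact Set.ncard_le_ncard fun x hx => hs x hx

lemma adj_iff_mem_of_degOf_le {s : Finset V} (hs : ∀ x ∈ s, G.Adj v x)
    (hdeg : degOf G v ≤ s.card) (x : V) : G.Adj v x ↔ x ∈ s := by
  have h := Set.eq_of_subset_of_ncard_le (fun x hx => hs x hx : ↑s ⊆ G.neighborSet v)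
    (by rwa [Set.ncard_coe_finset]) (Set.toFinite _)
  exact (Set.ext_iff.1 h x).symm

lemma InTriangle.exists_partner (ht : InTriangle G v) (h2 : degOf G v = 2) (ha : G.Adj v a) :
    ∃ b, G.Adj a b ∧ ∀ x, G.Adj v x ↔ x = a ∨ x = b := by
  obtain ⟨c, d, hc, hd, hcd⟩ := ht
  have hN x : G.Adj v x ↔ x = c ∨ x = d := by
    simpa using adj_iff_mem_of_degOf_le (s := {c, d}) (by simp [hc, hd])
      (by rw [h2, Finset.card_pair hcd.ne]) x
  rcases (hN a).1 ha with rfl | rfl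
  · exact ⟨d, hcd, hN⟩
  · exact ⟨c, hcd.symm, fun x => (hN x).trans or_comm⟩

lemma IsCSaturated.degOf_ne_three (hG : IsCSaturated 6 G) (hN : ∀ x, G.Adj v x ↔ x = a ∨ x = b)
    (hab : G.Adj a b) : degOf G a ≠ 3 := by
  intro h3
  have hva : G.Adj v a := (hN a).2 (.inl rfl)
  have hvb : G.Adj v b := (hN b).2 (.inr rfl)
  obtain ⟨x, hax, hx⟩ : ∃ x, G.Adj a x ∧ x ∉ ({v, b} : Set V) :=
    Set.exists_mem_notMem_of_ncard_lt_ncard <| by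
      rw [Set.ncard_pair hvb.ne]
      change 2 < degOf G a
      omega
  simp only [Set.mem_insert_iff, Set.mem_singleton_iff, not_or] at hx
  have hNa y : G.Adj a y ↔ y = v ∨ y = b ∨ y = x := by
    simpa using adj_iff_mem_of_degOf_le (s := {v, b, x}) (by simp [hva.symm, hab, hax])
      (h3 ▸ (Finset.card_eq_three.2 ⟨v, b, x, hvb.ne, Ne.symm hx.1, Ne.symm hx.2, rfl⟩).ge) y
  obtain ⟨y, hay, hy⟩ := hG.exists_adj_notMem_of_triangle hN hab hax hx.1 hx.2
  exact hy (by simpa using (hNa y).1 hay)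

lemma IsCSaturated.four_le_degOf (hG : IsCSaturated 6 G) (hv : v ∈ T1set G) (hva : G.Adj v a) :
    4 ≤ degOf G a := by
  obtain ⟨hv2, ht, hnb⟩ := hv
  obtain ⟨b, hab, hN⟩ := ht.exists_partner hv2 hva
  have hvb : G.Adj v b := (hN b).2 (.inr rfl)
  have h2 : 2 ≤ degOf G a := (Finset.card_pair hvb.ne).ge.trans <|
    card_le_degOf (by simp [hva.symm, hab])
  have := hnb a hva
  have := hG.degOf_ne_three hN hab
  omega

lemma IsCSaturated.adj_iff_of_mem_T1set (hG : IsCSaturated 6 G) (hv : v ∈ T1set G)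
    (hva : G.Adj v a) (hb : ∀ x, G.Adj a x → degOf G x ≠ 2 → x = b) (x : V) :
    G.Adj v x ↔ x = a ∨ x = b := by
  obtain ⟨b', hab', hN⟩ := hv.2.1.exists_partner hv.1 hva
  obtain rfl : b' = b :=
    hb b' hab' (by have := hG.four_le_degOf hv ((hN b').2 (.inr rfl)); omega)
  exact hN x

lemma IsCSaturated.five_le_degOf (hG : IsCSaturated 6 G) {v₁ v₂ v₃ : V} (h₁₂ : v₁ ≠ v₂)
    (h₁₃ : v₁ ≠ v₃) (h₂₃ : v₂ ≠ v₃) (hv₁ : v₁ ∈ T1set G) (hv₂ : v₂ ∈ T1set G)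
    (hv₃ : v₃ ∈ T1set G) (ha₁ : G.Adj a v₁) (ha₂ : G.Adj a v₂) (ha₃ : G.Adj a v₃) :
    5 ≤ degOf G a := by
  obtain ⟨b, hab, hN₁⟩ := hv₁.2.1.exists_partner hv₁.1 ha₁.symm
  have hb4 : 4 ≤ degOf G b := hG.four_le_degOf hv₁ ((hN₁ b).2 (.inr rfl))
  have hb_ne {w : V} (hw : w ∈ T1set G) : w ≠ b := by
    rintro rfl
    have := hw.1
    omega
  by_contra h5
  have h4 : degOf G a = 4 := by have := hG.four_le_degOf hv₁ ha₁.symm; omega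
  have hNa x : G.Adj a x ↔ x = v₁ ∨ x = v₂ ∨ x = v₃ ∨ x = b := by
    simpa using adj_iff_mem_of_degOf_le (s := {v₁, v₂, v₃, b}) (by simp [*])
      (h4 ▸ (Finset.card_eq_four.2 ⟨v₁, v₂, v₃, b, h₁₂, h₁₃, hb_ne hv₁, h₂₃, hb_ne hv₂,
        hb_ne hv₃, rfl⟩).ge) x
  have hN {w : V} (hw : w ∈ T1set G) (haw : G.Adj a w) (x : V) : G.Adj w x ↔ x = a ∨ x = b := by
    refine hG.adj_iff_of_mem_T1set hw haw.symm (fun y hy hy2 => ?_) x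
    rcases (hNa y).1 hy with rfl | rfl | rfl | rfl
    exacts [absurd hv₁.1 hy2, absurd hv₂.1 hy2, absurd hv₃.1 hy2, rfl]
  obtain ⟨x, hax, hx⟩ := hG.exists_adj_notMem_of_twins h₁₂ (hN hv₁ ha₁) (hN hv₂ ha₂) (hN hv₃ ha₃)
  exact hx (by simpa using (hNa x).1 hax)

end Degrees

section Counting

open scoped Classical
open Finset

variable {V : Type*} [Fintype V] {G : SimpleGraph V}

lemma degOf_eq_card_filter (v : V) : degOf G v = #{w | G.Adj v w} := by
  rw [degOf, ← Set.ncard_coe_finset, coe_filter]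
  simp [neighborSet]

lemma IsCSaturated.card_adj_T1set_add_six_le (hG : IsCSaturated 6 G) {a : V}
    (ha : 3 ≤ degOf G a) : #{v | v ∈ T1set G ∧ G.Adj a v} + 6 ≤ 2 * degOf G a := by
  set s : Finset V := {v | v ∈ T1set G ∧ G.Adj a v}
  obtain hs | ⟨v, hv⟩ := s.eq_empty_or_nonempty
  · rw [hs, card_empty]
    omega
  obtain ⟨hvT, hav⟩ : v ∈ T1set G ∧ G.Adj a v := by simpa [s] using hv
  have h4 := hG.four_le_degOf hvT hav.symm
  obtain ⟨b, hab, hN⟩ := hvT.2.1.exists_partner hvT.1 hav.symm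
  have hb : b ∉ s := fun hb => by
    have := hG.four_le_degOf hvT ((hN b).2 (.inr rfl))
    have := ((mem_filter.1 hb).2.1).1
    omega
  have hs_succ : #s + 1 ≤ degOf G a :=
    card_insert_of_notMem hb ▸ card_le_degOf (by simp [s, hab])
  have h5 : 3 ≤ #s → 5 ≤ degOf G a := fun h3 => by
    obtain ⟨x, hx, y, hy, z, hz, hxy, hxz, hyz⟩ := two_lt_card.1 h3
    simp only [s, mem_filter, mem_univ, true_and] at hx hy hz
    exact hG.five_le_degOf hxy hxz hyz hx.1 hy.1 hz.1 hx.2 hy.2 hz.2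
  omega

lemma IsCSaturated.sum_card_adj_T1set (hG : IsCSaturated 6 G) :
    ∑ a ∈ {a | 3 ≤ degOf G a}, #{v | v ∈ T1set G ∧ G.Adj a v} = 2 * #{v | v ∈ T1set G} := by
  set X₃ : Finset V := {a | 3 ≤ degOf G a}
  set T : Finset V := {v | v ∈ T1set G}
  have hbelow : ∀ v ∈ T, #(X₃.bipartiteBelow G.Adj v) = 2 := fun v hv => by
    have hvT : v ∈ T1set G := by simpa [T] using hv
    rw [← hvT.1, degOf_eq_card_filter]
    congr 1
    ext w
    simp only [bipartiteBelow, X₃, mem_filter, mem_univ, true_and, G.adj_comm w v,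
      and_iff_right_iff_imp]
    intro hvw
    have := hG.four_le_degOf hvT hvw
    omega
  calc ∑ a ∈ X₃, #{v | v ∈ T1set G ∧ G.Adj a v}
      = ∑ a ∈ X₃, #(T.bipartiteAbove G.Adj a) := by simp [T, bipartiteAbove, filter_filter]
    _ = ∑ v ∈ T, #(X₃.bipartiteBelow G.Adj v) :=
      sum_card_bipartiteAbove_eq_sum_card_bipartiteBelow _
    _ = 2 * #T := by rw [sum_congr rfl hbelow, sum_const, smul_eq_mul, mul_comm]

lemma IsCSaturated.card_T1set_add_le_sum_degOf (hG : IsCSaturated 6 G) :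
    #{v | v ∈ T1set G} + 3 * #{a | 3 ≤ degOf G a} ≤ ∑ a ∈ {a | 3 ≤ degOf G a}, degOf G a := by
  have := sum_le_sum fun a (ha : a ∈ ({a | 3 ≤ degOf G a} : Finset V)) =>
    hG.card_adj_T1set_add_six_le (mem_filter.1 ha).2
  rw [sum_add_distrib, hG.sum_card_adj_T1set, ← mul_sum, sum_const, smul_eq_mul] at this
  omega

end Counting

open Finset in
open scoped Classical in
theorem lemma_3_3_general {V : Type*} [Fintype V] (G : SimpleGraph V)
    (hG : IsCSaturated 6 G) :
    3 * (Finset.univ.filter (fun v : V =>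
        3 ≤ degOf G v ∨
          (degOf G v = 2 ∧ InTriangle G v ∧ ∀ w, G.Adj v w → degOf G w ≠ 2))).card ≤
      ∑ v ∈ Finset.univ.filter (fun v : V =>
        3 ≤ degOf G v ∨
          (degOf G v = 2 ∧ InTriangle G v ∧ ∀ w, G.Adj v w → degOf G w ≠ 2)), degOf G v := by
  set X₃ : Finset V := {a | 3 ≤ degOf G a}
  set T : Finset V := {v | v ∈ T1set G}
  suffices 3 * #(X₃ ∪ T) ≤ ∑ v ∈ X₃ ∪ T, degOf G v by
    rw [filter_or]
    convert this <;> rfl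
  have hdisj : Disjoint X₃ T := disjoint_filter.2 fun v _ h3 hv => by
    have := hv.1
    omega
  have hT : ∑ v ∈ T, degOf G v = 2 * #T := by
    rw [sum_congr rfl fun v hv => (mem_filter.1 hv).2.1, sum_const, smul_eq_mul, mul_comm]
  have hX₃ : #T + 3 * #X₃ ≤ ∑ a ∈ X₃, degOf G a := hG.card_T1set_add_le_sum_degOf
  rw [sum_union hdisj, card_union_of_disjoint hdisj, hT]
  omega

open scoped Classical in
/-- Lemma 3.3 of the paper: the degree sum over X is at least 3|X|. -/
theorem lemma_3_3 {V : Type*} [Fintype V] (G : SimpleGraph V)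
    (hG : IsCSaturated 6 G) (hmin : ∀ v, 2 ≤ degOf G v) (hex : ∃ v, degOf G v = 2) :
    3 * (Finset.univ.filter (fun v : V =>
        3 ≤ degOf G v ∨
          (degOf G v = 2 ∧ InTriangle G v ∧ ∀ w, G.Adj v w → degOf G w ≠ 2))).card ≤
      ∑ v ∈ Finset.univ.filter (fun v : V =>
        3 ≤ degOf G v ∨
          (degOf G v = 2 ∧ InTriangle G v ∧ ∀ w, G.Adj v w → degOf G w ≠ 2)), degOf G v :=
  lemma_3_3_general G hG
end

section
/- Let G be a C_6-saturated graph on n ≥ 6 vertices with minimum degree 2 such that every vertex of degree 2 lying in a triangle has no neighbor of degree 2 (i.e., T_2(G) = ∅). Then either G has a vertex of degree 2 not contained in any triangle, or e(G) ≥ 4n/3 - 2. -/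
open SimpleGraph

/-!
Call the degree-2 vertices roots. If no root is good, every root lies in a triangle, and
`T₂(G) = ∅` makes the roots independent, so exactly `2|R|` edges leave the root set `R`.
Discharging: every other vertex `u` with `r(u)` root neighbours satisfies
`8 + r(u) ≤ 3 deg u`. This is clear unless `r(u) ≥ 2`; then the triangle through a root gives a
non-root neighbour of `u`, so `deg u ≥ r(u) + 1`, and `deg u = 3` is impossible: two roots
`v₁, v₂` at `u` would both have neighbourhood `{u, b}` with `N(u) = {v₁, v₂, b}`, so no path of
length 5 joins them, although adding the non-edge `v₁v₂` must create a 6-cycle.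
Summing over all vertices gives `6 e(G) ≥ 8 n`.
-/

open Finset

namespace SimpleGraph.Walk

variable {V : Type*} {G : SimpleGraph V} {x y : V}

lemma IsCycle.exists_isPath_of_snd_eq {c : G.Walk x x} (hc : c.IsCycle) (hy : c.snd = y) :
    ∃ p : G.Walk x y, p.IsPath ∧ s(x, y) ∉ p.edges ∧ p.length + 1 = c.length := by
  cases c with
  | nil => exact absurd hc not_isCycle_nil
  | cons h p =>
    rw [snd_cons] at hy
    subst hy
    obtain ⟨hp, hxy⟩ := (cons_isCycle_iff p h).1 hc
    refine ⟨p.reverse, hp.reverse, ?_, by simp⟩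
    rwa [edges_reverse, List.mem_reverse]

lemma IsCycle.exists_isPath_of_mem_edges {c : G.Walk x x} (hc : c.IsCycle)
    (he : s(x, y) ∈ c.edges) :
    ∃ p : G.Walk x y, p.IsPath ∧ s(x, y) ∉ p.edges ∧ p.length + 1 = c.length := by
  cases c with
  | nil => exact absurd hc not_isCycle_nil
  | cons h p =>
    rw [edges_cons, List.mem_cons] at he
    rcases he with he | he
    · exact hc.exists_isPath_of_snd_eq (by rw [snd_cons, Sym2.congr_right.1 he])
    · have hp := ((cons_isCycle_iff p h).1 hc).1
      have hnil : ¬ p.Nil := fun hn => by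
        cases p with
        | nil => simp at he
        | cons => simp at hn
      obtain ⟨q, hq, hqe, hql⟩ := hc.reverse.exists_isPath_of_snd_eq
        (by rw [snd_reverse, penultimate_cons_of_not_nil _ _ hnil,
          ← hp.eq_penultimate_of_mem_edges he])
      exact ⟨q, hq, hqe, by rwa [length_reverse] at hql⟩

lemma IsPath.length_ne_five_of_neighborSet_subset {v₁ v₂ u b : V} {p : G.Walk v₁ v₂}
    (hp : p.IsPath) (h₁ : G.neighborSet v₁ ⊆ {u, b}) (h₂ : G.neighborSet v₂ ⊆ {u, b})
    (hu : G.neighborSet u ⊆ {v₁, v₂, b}) : p.length ≠ 5 := by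
  intro hlen
  set w := p.getVert
  have adj (i : ℕ) (hi : i < 5) : G.Adj (w i) (w (i + 1)) := p.adj_getVert_succ (hlen ▸ hi)
  have inj (i j : ℕ) (h : w i = w j) (hi : i ≤ 5 := by norm_num) (hj : j ≤ 5 := by norm_num) :
      i = j :=
    hp.getVert_injOn (by simp [hlen, hi]) (by simp [hlen, hj]) h
  have hw₀ : w 0 = v₁ := p.getVert_zero
  have hw₅ : w 5 = v₂ := hlen ▸ p.getVert_length
  have hw₁ : w 1 ∈ ({u, b} : Set V) := h₁ (hw₀ ▸ adj 0 (by norm_num))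
  have hw₄ : w 4 ∈ ({u, b} : Set V) := h₂ (hw₅ ▸ (adj 4 (by norm_num)).symm)
  rcases hw₁ with hw₁ | hw₁ <;> rcases hw₄ with hw₄ | hw₄
  · exact absurd (inj 1 4 (hw₁.trans hw₄.symm)) (by norm_num)
  · have hw₂ : w 2 ∈ ({v₁, v₂, b} : Set V) := hu (hw₁ ▸ adj 1 (by norm_num))
    rcases hw₂ with hw₂ | hw₂ | hw₂
    · exact absurd (inj 2 0 (hw₂.trans hw₀.symm)) (by norm_num)
    · exact absurd (inj 2 5 (hw₂.trans hw₅.symm)) (by norm_num)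
    · exact absurd (inj 2 4 (hw₂.trans hw₄.symm)) (by norm_num)
  · have hw₃ : w 3 ∈ ({v₁, v₂, b} : Set V) := hu (hw₄ ▸ (adj 3 (by norm_num)).symm)
    rcases hw₃ with hw₃ | hw₃ | hw₃
    · exact absurd (inj 3 0 (hw₃.trans hw₀.symm)) (by norm_num)
    · exact absurd (inj 3 5 (hw₃.trans hw₅.symm)) (by norm_num)
    · exact absurd (inj 3 1 (hw₃.trans hw₁.symm)) (by norm_num)
  · exact absurd (inj 1 4 (hw₁.trans hw₄.symm)) (by norm_num)

end SimpleGraph.Walk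

section

variable {V : Type*} {G : SimpleGraph V}

lemma mem_edgeSet_of_mem_edgeSet_addEdge {x y : V} {e : Sym2 V}
    (he : e ∈ (addEdge G x y).edgeSet) (hne : e ≠ s(x, y)) : e ∈ G.edgeSet := by
  rw [addEdge, edgeSet_sup, edgeSet_fromEdgeSet] at he
  exact he.resolve_right fun h => hne h.1

lemma exists_isPath_length_of_hasCycleLen_addEdge {x y : V} {k : ℕ}
    (hfree : ¬ HasCycleLen G (k + 1)) (h : HasCycleLen (addEdge G x y) (k + 1)) :
    ∃ p : G.Walk x y, p.IsPath ∧ p.length = k := by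
  classical
  obtain ⟨v, c, hc, hlen⟩ := h
  have toG {a b : V} (q : (addEdge G x y).Walk a b) (hq : s(x, y) ∉ q.edges) :
      ∀ e ∈ q.edges, e ∈ G.edgeSet := fun _ he =>
    mem_edgeSet_of_mem_edgeSet_addEdge (q.edges_subset_edgeSet he) (ne_of_mem_of_not_mem he hq)
  by_cases hmem : s(x, y) ∈ c.edges
  · have hx := c.fst_mem_support_of_mem_edges hmem
    obtain ⟨p, hp, hpe, hpl⟩ :=
      (hc.rotate hx).exists_isPath_of_mem_edges ((c.rotate_edges x hx).mem_iff.2 hmem)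
    refine ⟨p.transfer G (toG p hpe), hp.transfer _, ?_⟩
    rw [Walk.length_rotate] at hpl
    rw [Walk.length_transfer]
    omega
  · exact absurd ⟨v, c.transfer G (toG c hmem), hc.transfer _, by rw [Walk.length_transfer, hlen]⟩
      hfree

lemma exists_neighborSet_eq_pair {v u : V} (hv : degOf G v = 2) (ht : InTriangle G v)
    (hu : G.Adj v u) : ∃ b, G.neighborSet v = {u, b} ∧ G.Adj u b := by
  obtain ⟨a, c, hva, hvc, hac⟩ := ht
  have hN : G.neighborSet v = {a, c} :=
    (Set.eq_of_subset_of_ncard_le (Set.insert_subset hva (Set.singleton_subset_iff.2 hvc))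
      (by rw [Set.ncard_pair hac.ne]; exact hv.le)
      (Set.finite_of_ncard_ne_zero (show degOf G v ≠ 0 by omega))).symm
  have hu' : u ∈ ({a, c} : Set V) := hN ▸ hu
  rcases hu' with rfl | rfl
  · exact ⟨c, hN, hac⟩
  · exact ⟨a, hN.trans (Set.pair_comm _ _), hac.symm⟩

lemma degOf_ne_two_of_adj (hT2 : T2set G = ∅) {v w : V} (hv : degOf G v = 2)
    (ht : InTriangle G v) (hw : G.Adj v w) : degOf G w ≠ 2 :=
  fun h => Set.eq_empty_iff_forall_notMem.1 hT2 v ⟨hv, ht, w, hw, h⟩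

lemma degOf_ne_three_of_adj_of_adj (hG : IsCSaturated 6 G) (hT2 : T2set G = ∅) {u v₁ v₂ : V}
    (h₁ : G.Adj u v₁) (h₂ : G.Adj u v₂) (hne : v₁ ≠ v₂) (hd₁ : degOf G v₁ = 2)
    (hd₂ : degOf G v₂ = 2) (ht₁ : InTriangle G v₁) (ht₂ : InTriangle G v₂) : degOf G u ≠ 3 := by
  intro hu
  obtain ⟨b, hN₁, hub⟩ := exists_neighborSet_eq_pair hd₁ ht₁ h₁.symm
  obtain ⟨b₂, hN₂, hub₂⟩ := exists_neighborSet_eq_pair hd₂ ht₂ h₂.symm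
  have hb : degOf G b ≠ 2 :=
    degOf_ne_two_of_adj hT2 hd₁ ht₁ (show b ∈ G.neighborSet v₁ by simp [hN₁])
  have hb₂ : degOf G b₂ ≠ 2 :=
    degOf_ne_two_of_adj hT2 hd₂ ht₂ (show b₂ ∈ G.neighborSet v₂ by simp [hN₂])
  have hNu : G.neighborSet u = {v₁, v₂, b} :=
    (Set.eq_of_subset_of_ncard_le
      (Set.insert_subset h₁ (Set.insert_subset h₂ (Set.singleton_subset_iff.2 hub)))
      (by
        rw [Set.ncard_eq_three.2 ⟨v₁, v₂, b, hne, by rintro rfl; exact hb hd₁,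
          by rintro rfl; exact hb hd₂, rfl⟩]
        exact hu.le)
      (Set.finite_of_ncard_ne_zero (show degOf G u ≠ 0 by omega))).symm
  have hb₂b : b₂ = b := by
    have : b₂ ∈ G.neighborSet u := hub₂
    rw [hNu] at this
    rcases this with rfl | rfl | rfl
    exacts [absurd hd₁ hb₂, absurd hd₂ hb₂, rfl]
  subst hb₂b
  have hnadj : ¬ G.Adj v₁ v₂ := by
    intro h
    have : v₂ ∈ G.neighborSet v₁ := h
    rw [hN₁] at this
    rcases this with rfl | rfl
    exacts [h₂.ne rfl, hb hd₂]
  obtain ⟨p, hp, hlen⟩ :=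
    exists_isPath_length_of_hasCycleLen_addEdge hG.1 (hG.2 v₁ v₂ hne hnadj)
  exact hp.length_ne_five_of_neighborSet_subset hN₁.subset hN₂.subset hNu.subset hlen

end

section

variable {V : Type*} [Fintype V] {G : SimpleGraph V} [DecidableRel G.Adj]

lemma degOf_eq_degree (v : V) : degOf G v = G.degree v :=
  Set.ncard_eq_toFinset_card' _

lemma eight_add_card_adj_le_three_mul_degree (hG : IsCSaturated 6 G) (hT2 : T2set G = ∅)
    {R : Finset V} (hR : ∀ v ∈ R, degOf G v = 2 ∧ InTriangle G v) {u : V}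
    (hu : 2 ≤ degOf G u) (hu₂ : degOf G u ≠ 2) :
    8 + #{v ∈ R | G.Adj u v} ≤ 3 * G.degree u := by
  rw [← degOf_eq_degree]
  by_cases hr : #{v ∈ R | G.Adj u v} ≤ 1
  · omega
  obtain ⟨v₁, hv₁, v₂, hv₂, hne⟩ := one_lt_card.1 (not_le.1 hr)
  rw [mem_filter] at hv₁ hv₂
  have hu₃ : degOf G u ≠ 3 := degOf_ne_three_of_adj_of_adj hG hT2 hv₁.2 hv₂.2 hne
    (hR v₁ hv₁.1).1 (hR v₂ hv₂.1).1 (hR v₁ hv₁.1).2 (hR v₂ hv₂.1).2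
  obtain ⟨b, hN, hub⟩ := exists_neighborSet_eq_pair (hR v₁ hv₁.1).1 (hR v₁ hv₁.1).2 hv₁.2.symm
  have hb : b ∉ R := fun hbR => degOf_ne_two_of_adj hT2 (hR v₁ hv₁.1).1 (hR v₁ hv₁.1).2
    (show b ∈ G.neighborSet v₁ by simp [hN]) (hR b hbR).1
  have hlt : #{v ∈ R | G.Adj u v} < degOf G u := by
    rw [degOf_eq_degree, ← card_neighborFinset_eq_degree]
    refine card_lt_card ((ssubset_iff_of_subset fun v hv => ?_).2 ⟨b, ?_, ?_⟩)
    · simpa using (mem_filter.1 hv).2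
    · simpa using hub
    · simp [hb]
  omega

lemma four_mul_card_le_three_mul_card_edgeFinset [DecidableEq V] (R : Finset V)
    (hR : ∀ v ∈ R, G.degree v = 2) (hRind : ∀ v ∈ R, ∀ w ∈ R, ¬ G.Adj v w)
    (hRc : ∀ u ∉ R, 8 + #{v ∈ R | G.Adj u v} ≤ 3 * G.degree u) :
    4 * Fintype.card V ≤ 3 * #G.edgeFinset := by
  have hdouble : ∑ u ∈ Rᶜ, #{v ∈ R | G.Adj u v} = 2 * #R := by
    refine (sum_card_bipartiteAbove_eq_sum_card_bipartiteBelow G.Adj).trans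
      ((sum_const_nat fun v hv => ?_).trans (mul_comm _ _))
    rw [← hR v hv, ← card_neighborFinset_eq_degree]
    congr 1
    ext u
    simpa [bipartiteBelow, adj_comm] using fun h hu => hRind v hv u hu h
  have hdeg : ∑ v ∈ R, G.degree v = 2 * #R := (sum_const_nat hR).trans (mul_comm _ _)
  have hsum := sum_le_sum fun u hu => hRc u (mem_compl.1 hu)
  rw [sum_add_distrib, sum_const, smul_eq_mul, hdouble, ← mul_sum, card_compl] at hsum
  have := G.sum_degrees_eq_twice_card_edges
  rw [← sum_add_sum_compl R, hdeg] at this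
  have := card_le_univ R
  omega

end

theorem lemma_3_4_general {V : Type*} [Fintype V] (n : ℕ)
    (hcard : Fintype.card V = n) (G : SimpleGraph V) (hG : IsCSaturated 6 G)
    (hmin : ∀ v, 2 ≤ degOf G v)
    (hT2 : T2set G = ∅) :
    (∃ v, degOf G v = 2 ∧ ¬ InTriangle G v) ∨
      4 * (n : ℚ) / 3 - 2 ≤ (G.edgeSet.ncard : ℚ) := by
  classical
  refine or_iff_not_imp_left.2 fun hgood => ?_
  push Not at hgood
  let R : Finset V := {v | degOf G v = 2}
  have hR : ∀ v ∈ R, degOf G v = 2 ∧ InTriangle G v := fun v hv =>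
    have hv : degOf G v = 2 := (mem_filter.1 hv).2
    ⟨hv, hgood v hv⟩
  have hbound : 4 * n ≤ 3 * #G.edgeFinset := hcard ▸
    four_mul_card_le_three_mul_card_edgeFinset (G := G) R
      (fun v hv => (degOf_eq_degree v).symm.trans (hR v hv).1)
      (fun v hv w hw hvw => degOf_ne_two_of_adj hT2 (hR v hv).1 (hR v hv).2 hvw (hR w hw).1)
      (fun u hu => eight_add_card_adj_le_three_mul_degree hG hT2 hR (hmin u)
        fun h => hu (mem_filter.2 ⟨mem_univ u, h⟩))
  rw [← coe_edgeFinset, Set.ncard_coe_finset]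
  have : (4 * n : ℚ) ≤ 3 * #G.edgeFinset := by exact_mod_cast hbound
  linarith

/-- Lemma 3.4 of the paper. -/
theorem lemma_3_4 {V : Type*} [Fintype V] (n : ℕ) (hn : 6 ≤ n)
    (hcard : Fintype.card V = n) (G : SimpleGraph V) (hG : IsCSaturated 6 G)
    (hmin : ∀ v, 2 ≤ degOf G v) (hex : ∃ v, degOf G v = 2)
    (hT2 : T2set G = ∅) :
    (∃ v, degOf G v = 2 ∧ ¬ InTriangle G v) ∨
      4 * (n : ℚ) / 3 - 2 ≤ (G.edgeSet.ncard : ℚ) :=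
  lemma_3_4_general n hcard G hG hmin hT2
end

section
/- Let G be a C_6-saturated graph with minimum degree 2 and suppose there exists a vertex α of degree 2 lying in a triangle, with N(α) = {α₁, α₂}, N(α₁) = {α, α₂, x₁}, N(α₂) = {α, α₁, x₂}, where x₁ ≠ x₂. Then G contains no path of length 5 from α to x₁ whose second vertex is α₂. -/
/-!
The neighbours `α, α₂, x₁` of `α₁` sit at positions `0, 1, 5` of the path, whereas a vertex in an
interior position `i` has path-neighbours at positions `i - 1` and `i + 1`. Hence `α₁` is not on
the path, and the tail `α₂ ⋯ x₁` of the path closes through `α₁` into a 6-cycle.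
-/

open SimpleGraph

namespace SimpleGraph.Walk

variable {V : Type*} {G : SimpleGraph V}

theorem IsPath.isCycle_cons_concat {u v w : V} {p : G.Walk u v} (hp : p.IsPath)
    (hw : w ∉ p.support) (huv : u ≠ v) (hwu : G.Adj w u) (hvw : G.Adj v w) :
    (cons hwu (p.concat hvw)).IsCycle := by
  refine (cons_isCycle_iff _ _).mpr ⟨hp.concat hw hvw, fun he => ?_⟩
  rw [edges_concat, List.concat_eq_append, List.mem_append, List.mem_singleton] at he
  rcases he with he | he
  · exact hw (p.fst_mem_support_of_mem_edges he)
  · rcases Sym2.eq_iff.mp he with ⟨rfl, -⟩ | ⟨-, rfl⟩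
    · exact hw p.end_mem_support
    · exact huv rfl

theorem IsPath.notMem_support_of_neighborSet_eq {u v y : V} {p : G.Walk u v} (hp : p.IsPath)
    (hlen : 4 ≤ p.length) (hy : G.neighborSet y = {u, p.getVert 1, v}) : y ∉ p.support := by
  intro hmem
  obtain ⟨i, rfl, hi⟩ := mem_support_iff_exists_getVert.mp hmem
  have hpos : ∀ j ≤ p.length,
      G.Adj (p.getVert i) (p.getVert j) ↔ j = 0 ∨ j = 1 ∨ j = p.length := by
    intro j hj
    have hinj : ∀ k ≤ p.length, p.getVert j = p.getVert k ↔ j = k := fun k hk =>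
      ⟨fun h => hp.getVert_injOn hj hk h, by rintro rfl; rfl⟩
    rw [← mem_neighborSet, hy, Set.mem_insert_iff, Set.mem_insert_iff, Set.mem_singleton_iff,
      hinj 1 (by omega), ← hinj 0 (by omega), ← hinj p.length le_rfl, p.getVert_zero,
      p.getVert_length]
  have hnot : i ≠ 0 ∧ i ≠ 1 ∧ i ≠ p.length := by
    refine ⟨?_, ?_, ?_⟩ <;> rintro rfl <;> exact G.irrefl ((hpos _ (by omega)).mpr (by omega))
  have hsucc := (hpos (i + 1) (by omega)).mp (p.adj_getVert_succ (by omega))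
  have hpred := (hpos (i - 1) (by omega)).mp
    (by simpa [Nat.sub_add_cancel (by omega : 1 ≤ i)] using
      (p.adj_getVert_succ (i := i - 1) (by omega)).symm)
  omega

end SimpleGraph.Walk

theorem no_five_path_through_alpha2_general {V : Type*} (G : SimpleGraph V)
    (hG : IsCSaturated 6 G)
    (a a1 a2 x1 : V)
    (hNa1 : G.neighborSet a1 = {a, a2, x1}) :
    ¬ ∃ P : G.Walk a x1, P.IsPath ∧ P.length = 5 ∧
        P.support.tail.head? = some a2 := by
  rintro ⟨_ | @⟨_, b, _, h, Q⟩, hP, hlen, hsnd⟩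
  · simp at hlen
  rw [Walk.support_cons, List.tail_cons, ← Walk.cons_tail_support, List.head?_cons,
    Option.some_inj] at hsnd
  subst b
  have ha1 : a1 ∉ Q.support := fun hmem =>
    hP.notMem_support_of_neighborSet_eq (by omega) (by simpa using hNa1)
      (List.mem_cons_of_mem _ hmem)
  have ha1a2 : G.Adj a1 a2 := by rw [← mem_neighborSet, hNa1]; simp
  have hx1a1 : G.Adj x1 a1 := (show G.Adj a1 x1 by rw [← mem_neighborSet, hNa1]; simp).symm
  have hQ : Q.IsPath := hP.of_cons
  have ha2x1 : a2 ≠ x1 := by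
    rintro rfl
    simp [(Walk.isPath_iff_nil.mp hQ).length_eq_zero] at hlen
  refine hG.1 ⟨a1, _, hQ.isCycle_cons_concat ha1 ha2x1 ha1a2 hx1a1, ?_⟩
  simp only [Walk.length_cons, Walk.length_concat] at hlen ⊢
  omega

/-- No 5-path from a to x1 starts through a2 (part of Lemma 3.3's argument). -/
theorem no_five_path_through_alpha2 {V : Type*} (G : SimpleGraph V)
    (hG : IsCSaturated 6 G) (hmin : ∀ v, 2 ≤ degOf G v)
    (a a1 a2 x1 x2 : V) (hda : degOf G a = 2) (htri : InTriangle G a)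
    (hNa : G.neighborSet a = {a1, a2})
    (hNa1 : G.neighborSet a1 = {a, a2, x1})
    (hNa2 : G.neighborSet a2 = {a, a1, x2})
    (hx : x1 ≠ x2) :
    ¬ ∃ P : G.Walk a x1, P.IsPath ∧ P.length = 5 ∧
        P.support.tail.head? = some a2 :=
  no_five_path_through_alpha2_general G hG a a1 a2 x1 hNa1
end
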